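/- Let a, b be real numbers with a > 0, b < 0, 4a + b > 3|b|, and a + b > 0. Define f : [-1,1] → ℝ by f(x) = (a + b x^2)(4a + b(1 - x^2)) + a b (1 - x^2) + (b^2/4)(1 - x^2)^2. Then f(x) ≥ min((4a+b)^2/4, 4a(a+b)) > 0 for all x in [-1,1]. -/

import Mathlib

/-! In `s = x ^ 2 ∈ [0, 1]` the polynomial is the concave quadratic
`s • 4a(a+b) + (1 - s) • (4a+b)²/4 + (3/4) b² s (1 - s)`,
so it lies above the chord joining its values `(4a+b)²/4` at `s = 0` and `4a(a+b)` at `s = 1`. -/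

open Set

theorem aux_poly_eq_combo_add (a b x : ℝ) :
    (a + b * x ^ 2) * (4 * a + b * (1 - x ^ 2)) + a * b * (1 - x ^ 2)
        + (b ^ 2 / 4) * (1 - x ^ 2) ^ 2 =
      x ^ 2 * (4 * a * (a + b)) + (1 - x ^ 2) * ((4 * a + b) ^ 2 / 4)
        + 3 / 4 * b ^ 2 * (x ^ 2 * (1 - x ^ 2)) := by
  ring

theorem min_le_aux_poly (a b : ℝ) {x : ℝ} (hx : x ∈ Icc (-1 : ℝ) 1) :
    min ((4 * a + b) ^ 2 / 4) (4 * a * (a + b)) ≤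
      (a + b * x ^ 2) * (4 * a + b * (1 - x ^ 2)) + a * b * (1 - x ^ 2)
        + (b ^ 2 / 4) * (1 - x ^ 2) ^ 2 := by
  have hs : 0 ≤ 1 - x ^ 2 := sub_nonneg.2 (sq_le_one_iff_abs_le_one x |>.2 (abs_le.2 hx))
  rw [aux_poly_eq_combo_add, min_comm]
  calc min (4 * a * (a + b)) ((4 * a + b) ^ 2 / 4)
      ≤ x ^ 2 * (4 * a * (a + b)) + (1 - x ^ 2) * ((4 * a + b) ^ 2 / 4) :=
        Convex.min_le_combo (E := ℝ) _ _ (sq_nonneg x) hs (by ring)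
    _ ≤ _ := le_add_of_nonneg_right (by have := mul_nonneg (sq_nonneg x) hs; positivity)

theorem stmt2_general (a b : ℝ) (ha : 0 < a)
    (hab : 0 < a + b) (f : ℝ → ℝ)
    (hf : ∀ x : ℝ, f x =
      (a + b * x ^ 2) * (4 * a + b * (1 - x ^ 2)) + a * b * (1 - x ^ 2)
        + (b ^ 2 / 4) * (1 - x ^ 2) ^ 2) :
    (∀ x ∈ Set.Icc (-1 : ℝ) 1,
        min ((4 * a + b) ^ 2 / 4) (4 * a * (a + b)) ≤ f x) ∧
      0 < min ((4 * a + b) ^ 2 / 4) (4 * a * (a + b)) := by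
  have h4ab : 0 < 4 * a + b := by linarith
  refine ⟨fun x hx => (hf x).symm ▸ min_le_aux_poly a b hx, lt_min ?_ ?_⟩
  · exact div_pos (pow_pos h4ab 2) four_pos
  · exact mul_pos (mul_pos four_pos ha) hab

/-- positive lower bound for the auxiliary polynomial on `[-1, 1]`. -/
theorem stmt2 (a b : ℝ) (ha : 0 < a) (hb : b < 0) (hab4 : 3 * |b| < 4 * a + b)
    (hab : 0 < a + b) (f : ℝ → ℝ)
    (hf : ∀ x : ℝ, f x =
      (a + b * x ^ 2) * (4 * a + b * (1 - x ^ 2)) + a * b * (1 - x ^ 2)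
        + (b ^ 2 / 4) * (1 - x ^ 2) ^ 2) :
    (∀ x ∈ Set.Icc (-1 : ℝ) 1,
        min ((4 * a + b) ^ 2 / 4) (4 * a * (a + b)) ≤ f x) ∧
      0 < min ((4 * a + b) ^ 2 / 4) (4 * a * (a + b)) :=
  stmt2_general a b ha hab f hf
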